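/- Let d ≥ 1 and r > 0, and define ψ : ℝ^d → ℝ by ψ(y) = V_r(0,y) / V_r². Then ψ is a probability density (∫_{ℝ^d} ψ(y) dy = 1), and for every n ≥ 1 the n-fold convolution power ψ^{*n} (with ψ^{*1} = ψ and ψ^{*(n+1)} = ψ^{*n} * ψ) is continuous on ℝ^d and satisfies ψ^{*n}(y) ≥ ψ^{*n}(y') for all y, y' ∈ ℝ^d with |y| ≤ |y'|. -/

import Mathlib

open MeasureTheory Metric

/-- The density `ψ(y) = V_r(0,y) / V_r²` of a single jump of the Lévy process `ξ^{(r)}`. -/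
noncomputable def psiFn (d : ℕ) (r : ℝ) (y : EuclideanSpace ℝ (Fin d)) : ℝ :=
  (volume (ball (0 : EuclideanSpace ℝ (Fin d)) r ∩ ball y r)).toReal /
    (volume (ball (0 : EuclideanSpace ℝ (Fin d)) r)).toReal ^ 2

/-- `convPow d ψ n = ψ^{*(n+1)}`, the `(n+1)`-fold convolution power of `ψ`. -/
noncomputable def convPow (d : ℕ) (ψ : EuclideanSpace ℝ (Fin d) → ℝ) :
    ℕ → EuclideanSpace ℝ (Fin d) → ℝ
  | 0 => ψ
  | n + 1 => fun x => ∫ y, convPow d ψ n (x - y) * ψ y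

/-!
Reflection argument: given `‖u‖ ≤ ‖v‖`, the reflection `σ` in the perpendicular bisector of `u`
and `v` preserves Lebesgue measure and swaps `u` and `v`, so twice the difference of the
convolution `∫ f (· - x) g x` at `v` and at `u` is the integral of
`(f (v - x) - f (u - x)) * (g x - g (σ x))`. The identity
`‖v - u‖² (‖σ x‖² - ‖x‖²) = (‖v‖² - ‖u‖²) (‖x - v‖² - ‖x - u‖²)` shows that if `x` is closer to
`u` than to `v` then `‖x‖ ≤ ‖σ x‖`, and conversely, so for radially nonincreasing `f` and `g` the
integrand is nonpositive.

Up to the factor `V_r⁻²`, `ψ` is the autoconvolution of the indicator of `B(0,r)`, so it is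
radially nonincreasing with total mass `1`. It is continuous with compact support, so convolving
a continuous function with it gives a continuous function, and monotonicity propagates by
induction.
-/

open scoped RealInnerProductSpace Convolution

section RadiallyAntitone

variable {E : Type*} [Norm E]

def IsRadiallyAntitone (f : E → ℝ) : Prop :=
  ∀ y y' : E, ‖y‖ ≤ ‖y'‖ → f y' ≤ f y

variable {f : E → ℝ}

theorem IsRadiallyAntitone.eq_of_norm_eq (hf : IsRadiallyAntitone f) {y y' : E}
    (h : ‖y‖ = ‖y'‖) : f y = f y' :=
  le_antisymm (hf y' y h.ge) (hf y y' h.le)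

theorem IsRadiallyAntitone.div_const (hf : IsRadiallyAntitone f) {c : ℝ} (hc : 0 ≤ c) :
    IsRadiallyAntitone fun y => f y / c :=
  fun y y' h => div_le_div_of_nonneg_right (hf y y' h) hc

end RadiallyAntitone

section BisectorReflection

variable {E : Type*} [NormedAddCommGroup E] [InnerProductSpace ℝ E]

theorem Submodule.reflection_orthogonal_singleton_apply (w x : E) :
    (ℝ ∙ w)ᗮ.reflection x = x - (2 * ⟪w, x⟫ / ‖w‖ ^ 2) • w := by
  rw [reflection_orthogonal_apply, reflection_singleton_apply]
  simp only [RCLike.ofReal_real_eq_id, id]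
  module

noncomputable def bisectorReflection (u v x : E) : E :=
  v + (ℝ ∙ (v - u))ᗮ.reflection (x - u)

theorem bisectorReflection_left (u v : E) : bisectorReflection u v u = v := by
  simp [bisectorReflection]

theorem bisectorReflection_right (u v : E) : bisectorReflection u v v = u := by
  simp [bisectorReflection, Submodule.reflection_orthogonalComplement_singleton_eq_neg]

theorem isometry_bisectorReflection (u v : E) : Isometry (bisectorReflection u v) :=
  Isometry.of_dist_eq fun x y => by simp [bisectorReflection, dist_eq_norm, ← map_sub]

theorem norm_sub_bisectorReflection_left (u v x : E) :
    ‖v - bisectorReflection u v x‖ = ‖u - x‖ := by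
  simpa [bisectorReflection_left, dist_eq_norm] using
    (isometry_bisectorReflection u v).dist_eq u x

theorem norm_sub_bisectorReflection_right (u v x : E) :
    ‖u - bisectorReflection u v x‖ = ‖v - x‖ := by
  simpa [bisectorReflection_right, dist_eq_norm] using
    (isometry_bisectorReflection u v).dist_eq v x

theorem norm_sq_bisectorReflection_sub (u v x : E) :
    ‖v - u‖ ^ 2 * (‖bisectorReflection u v x‖ ^ 2 - ‖x‖ ^ 2) =
      (‖v‖ ^ 2 - ‖u‖ ^ 2) * (‖x - v‖ ^ 2 - ‖x - u‖ ^ 2) := by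
  obtain ⟨w, rfl⟩ : ∃ w, v = u + w := ⟨v - u, by abel⟩
  rcases eq_or_ne w 0 with rfl | hw
  · simp
  have hw' : ‖w‖ ≠ 0 := norm_ne_zero_iff.2 hw
  simp only [bisectorReflection, Submodule.reflection_orthogonal_singleton_apply,
    add_sub_cancel_left, ← real_inner_self_eq_norm_sq, inner_add_left, inner_add_right,
    inner_sub_left, inner_sub_right, inner_smul_left, inner_smul_right, RCLike.conj_to_real]
  rw [real_inner_self_eq_norm_sq w]
  simp only [real_inner_comm u w, real_inner_comm u x, real_inner_comm w x]
  field_simp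
  ring

theorem norm_le_norm_bisectorReflection {u v x : E} (huv : ‖u‖ ≤ ‖v‖) (hne : u ≠ v)
    (hx : ‖x - u‖ ≤ ‖x - v‖) : ‖x‖ ≤ ‖bisectorReflection u v x‖ := by
  have hw : 0 < ‖v - u‖ ^ 2 := by positivity [sub_ne_zero.2 hne.symm]
  have key := mul_nonneg (sub_nonneg.2 (pow_le_pow_left₀ (norm_nonneg u) huv 2))
    (sub_nonneg.2 (pow_le_pow_left₀ (norm_nonneg _) hx 2))
  rw [← norm_sq_bisectorReflection_sub, mul_nonneg_iff_of_pos_left hw, sub_nonneg] at key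
  exact (pow_le_pow_iff_left₀ (norm_nonneg _) (norm_nonneg _) two_ne_zero).1 key

theorem norm_bisectorReflection_le_norm {u v x : E} (huv : ‖u‖ ≤ ‖v‖) (hne : u ≠ v)
    (hx : ‖x - v‖ ≤ ‖x - u‖) : ‖bisectorReflection u v x‖ ≤ ‖x‖ := by
  have hw : 0 < ‖v - u‖ ^ 2 := by positivity [sub_ne_zero.2 hne.symm]
  have key := mul_nonpos_of_nonneg_of_nonpos
    (sub_nonneg.2 (pow_le_pow_left₀ (norm_nonneg u) huv 2))
    (sub_nonpos.2 (pow_le_pow_left₀ (norm_nonneg _) hx 2))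
  rw [← norm_sq_bisectorReflection_sub] at key
  exact (pow_le_pow_iff_left₀ (norm_nonneg _) (norm_nonneg _) two_ne_zero).1
    (sub_nonpos.1 (nonpos_of_mul_nonpos_right key hw))

theorem measurePreserving_bisectorReflection [FiniteDimensional ℝ E] [MeasurableSpace E]
    [BorelSpace E] (u v : E) : MeasurePreserving (bisectorReflection u v) :=
  (measurePreserving_add_left volume v).comp
    ((LinearIsometryEquiv.measurePreserving _).comp (measurePreserving_sub_right volume u))

end BisectorReflection

section RadialConvolution

variable {E : Type*} [NormedAddCommGroup E] [InnerProductSpace ℝ E] {f g : E → ℝ}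

theorem IsRadiallyAntitone.sub_mul_sub_bisectorReflection_nonpos (hf : IsRadiallyAntitone f)
    (hg : IsRadiallyAntitone g) {u v : E} (huv : ‖u‖ ≤ ‖v‖) (x : E) :
    (f (v - x) - f (u - x)) * (g x - g (bisectorReflection u v x)) ≤ 0 := by
  rcases eq_or_ne u v with rfl | hne
  · simp
  rcases le_total ‖x - u‖ ‖x - v‖ with hx | hx
  · refine mul_nonpos_of_nonpos_of_nonneg (sub_nonpos.2 (hf _ _ ?_))
      (sub_nonneg.2 (hg _ _ (norm_le_norm_bisectorReflection huv hne hx)))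
    rwa [norm_sub_rev u, norm_sub_rev v]
  · refine mul_nonpos_of_nonneg_of_nonpos (sub_nonneg.2 (hf _ _ ?_))
      (sub_nonpos.2 (hg _ _ (norm_bisectorReflection_le_norm huv hne hx)))
    rwa [norm_sub_rev u, norm_sub_rev v]

theorem IsRadiallyAntitone.integral_sub_mul [FiniteDimensional ℝ E] [MeasurableSpace E]
    [BorelSpace E] (hf : IsRadiallyAntitone f) (hg : IsRadiallyAntitone g)
    (hfg : ∀ u, Integrable fun x => f (u - x) * g x) :
    IsRadiallyAntitone fun u => ∫ x, f (u - x) * g x := by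
  intro u v huv
  set σ := bisectorReflection u v
  set φ : E → ℝ := fun x => f (v - x) * g x - f (u - x) * g x
  have hφ : Integrable φ := (hfg v).sub (hfg u)
  have hσ : MeasurePreserving σ := measurePreserving_bisectorReflection u v
  have hσemb : MeasurableEmbedding σ :=
    (isometry_bisectorReflection u v).isClosedEmbedding.measurableEmbedding
  have hpair : ∀ x, φ x + φ (σ x) = (f (v - x) - f (u - x)) * (g x - g (σ x)) := fun x => by
    have hv : f (v - σ x) = f (u - x) := hf.eq_of_norm_eq (norm_sub_bisectorReflection_left u v x)
    have hu : f (u - σ x) = f (v - x) := hf.eq_of_norm_eq (norm_sub_bisectorReflection_right u v x)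
    simp only [φ, hu, hv]
    ring
  have hsum : ∫ x, φ x + φ (σ x) ≤ 0 := integral_nonpos fun x =>
    (hpair x).symm ▸ hf.sub_mul_sub_bisectorReflection_nonpos hg huv x
  have hφσ : Integrable fun x => φ (σ x) := (hσ.integrable_comp_emb hσemb).2 hφ
  rw [integral_add hφ hφσ, hσ.integral_comp hσemb] at hsum
  beta_reduce
  rw [← sub_nonpos, ← integral_sub (hfg v) (hfg u)]
  linarith

end RadialConvolution

section BallIndicator

variable {E : Type*} [NormedAddCommGroup E]

noncomputable def ballIndicator (r : ℝ) : E → ℝ :=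
  (ball (0 : E) r).indicator 1

theorem norm_ballIndicator_le_one (r : ℝ) (x : E) : ‖ballIndicator r x‖ ≤ 1 :=
  (norm_indicator_le_norm_self _ _).trans (by simp)

theorem isRadiallyAntitone_ballIndicator (r : ℝ) :
    IsRadiallyAntitone (ballIndicator (E := E) r) := by
  intro y y' h
  by_cases hy' : y' ∈ ball (0 : E) r
  · have hy : y ∈ ball (0 : E) r := by
      rw [mem_ball_zero_iff] at hy' ⊢
      exact h.trans_lt hy'
    simp [ballIndicator, hy, hy']
  · simp only [ballIndicator, Set.indicator_of_notMem hy']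
    exact Set.indicator_nonneg (fun _ _ => zero_le_one) y

theorem ballIndicator_sub_mul_ballIndicator (r : ℝ) (y x : E) :
    ballIndicator r (y - x) * ballIndicator r x = (ball 0 r ∩ ball y r).indicator 1 x := by
  have hmem : y - x ∈ ball (0 : E) r ↔ x ∈ ball y r := by
    rw [mem_ball_zero_iff, mem_ball_iff_norm, norm_sub_rev]
  by_cases hx : x ∈ ball (0 : E) r <;> by_cases hy : x ∈ ball y r <;>
    simp [ballIndicator, hmem, hx, hy]

variable [MeasurableSpace E] [BorelSpace E]

theorem measurable_ballIndicator (r : ℝ) : Measurable (ballIndicator (E := E) r) :=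
  measurable_const.indicator measurableSet_ball

variable [InnerProductSpace ℝ E] [FiniteDimensional ℝ E]

theorem integrable_ballIndicator (r : ℝ) : Integrable (ballIndicator (E := E) r) :=
  (integrable_indicator_iff measurableSet_ball).2 (integrableOn_const measure_ball_lt_top.ne)

theorem integral_ballIndicator (r : ℝ) :
    ∫ x, ballIndicator (E := E) r x = volume.real (ball (0 : E) r) :=
  integral_indicator_one measurableSet_ball

theorem integral_ballIndicator_sub_mul_ballIndicator (r : ℝ) (y : E) :
    ∫ x, ballIndicator r (y - x) * ballIndicator r x = volume.real (ball 0 r ∩ ball y r) := by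
  simp only [ballIndicator_sub_mul_ballIndicator]
  exact integral_indicator_one (measurableSet_ball.inter measurableSet_ball)

theorem integral_integral_ballIndicator_sub_mul_ballIndicator (r : ℝ) :
    ∫ y, ∫ x, ballIndicator (E := E) r (y - x) * ballIndicator r x =
      volume.real (ball (0 : E) r) ^ 2 := by
  simp_rw [← convolution_mul_swap (μ := volume)]
  rw [integral_convolution _ (integrable_ballIndicator r) (integrable_ballIndicator r),
    ContinuousLinearMap.mul_apply', integral_ballIndicator, sq]

theorem continuous_integral_ballIndicator_sub_mul {r : ℝ} (hr : r ≠ 0) {g : E → ℝ}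
    (hg : Integrable g) : Continuous fun y => ∫ x, ballIndicator r (y - x) * g x := by
  refine continuous_iff_continuousAt.2 fun y₀ =>
    continuousAt_of_dominated (bound := fun x => ‖g x‖) ?_ ?_ hg.norm ?_
  · refine Filter.Eventually.of_forall fun y => AEStronglyMeasurable.mul ?_ hg.aestronglyMeasurable
    exact ((measurable_ballIndicator r).comp
      (measurable_const.sub measurable_id)).aestronglyMeasurable
  · refine Filter.Eventually.of_forall fun y => ae_of_all _ fun x => ?_
    rw [norm_mul]
    exact mul_le_of_le_one_left (norm_nonneg _) (norm_ballIndicator_le_one r _)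
  · -- the indicator only jumps on a sphere, which is null
    have hsphere : ∀ᵐ x ∂volume, x ∉ sphere y₀ r :=
      measure_eq_zero_iff_ae_notMem.1 (Measure.addHaar_sphere_of_ne_zero volume y₀ hr)
    filter_upwards [hsphere] with x hx
    have hfr : y₀ - x ∉ frontier (ball (0 : E) r) := by
      rwa [frontier_ball 0 hr, mem_sphere_iff_norm, sub_zero, ← dist_eq_norm, dist_comm,
        ← mem_sphere]
    have hcont : ContinuousAt (ballIndicator r) (y₀ - x) :=
      continuousOn_const.continuousAt_indicator hfr
    exact (hcont.comp (f := fun y => y - x) (continuous_sub_right x).continuousAt).mul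
      continuousAt_const

end BallIndicator

section Psi

variable (d : ℕ)

theorem psiFn_eq (r : ℝ) :
    psiFn d r = fun y => (∫ x, ballIndicator r (y - x) * ballIndicator r x) /
      volume.real (ball (0 : EuclideanSpace ℝ (Fin d)) r) ^ 2 := by
  ext y
  rw [integral_ballIndicator_sub_mul_ballIndicator]
  rfl

theorem integral_psiFn {r : ℝ} (hr : 0 < r) : ∫ y, psiFn d r y = 1 := by
  have hV : 0 < volume.real (ball (0 : EuclideanSpace ℝ (Fin d)) r) :=
    ENNReal.toReal_pos (measure_ball_pos volume 0 hr).ne' measure_ball_lt_top.ne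
  rw [psiFn_eq, integral_div, integral_integral_ballIndicator_sub_mul_ballIndicator,
    div_self (pow_ne_zero 2 hV.ne')]

theorem continuous_psiFn {r : ℝ} (hr : r ≠ 0) : Continuous (psiFn d r) := by
  rw [psiFn_eq]
  exact (continuous_integral_ballIndicator_sub_mul hr (integrable_ballIndicator r)).div_const _

theorem hasCompactSupport_psiFn (r : ℝ) : HasCompactSupport (psiFn d r) := by
  refine HasCompactSupport.intro (isCompact_closedBall 0 (r + r)) fun y hy => ?_
  rw [mem_closedBall, dist_zero_right, not_le] at hy
  have hdisj : Disjoint (ball (0 : EuclideanSpace ℝ (Fin d)) r) (ball y r) :=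
    ball_disjoint_ball (by rw [dist_zero_left]; exact hy.le)
  simp [psiFn, hdisj.inter_eq]

theorem isRadiallyAntitone_psiFn (r : ℝ) : IsRadiallyAntitone (psiFn d r) := by
  rw [psiFn_eq]
  refine IsRadiallyAntitone.div_const ?_ (sq_nonneg _)
  exact (isRadiallyAntitone_ballIndicator r).integral_sub_mul (isRadiallyAntitone_ballIndicator r)
    fun y => (integrable_ballIndicator r).bdd_mul
      ((measurable_ballIndicator r).comp (measurable_const.sub measurable_id)).aestronglyMeasurable
      (ae_of_all _ fun x => norm_ballIndicator_le_one r (y - x))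

end Psi

section ConvPow

variable {d : ℕ} {ψ : EuclideanSpace ℝ (Fin d) → ℝ}

theorem convPow_succ (n : ℕ) :
    convPow d ψ (n + 1) = convPow d ψ n ⋆[ContinuousLinearMap.mul ℝ ℝ] ψ := by
  ext x
  rw [convolution_mul_swap]
  rfl

theorem continuous_convPow (hc : Continuous ψ) (hs : HasCompactSupport ψ) (n : ℕ) :
    Continuous (convPow d ψ n) := by
  induction n with
  | zero => exact hc
  | succ n ih =>
    rw [convPow_succ]
    exact hs.continuous_convolution_right _ ih.locallyIntegrable hc

theorem isRadiallyAntitone_convPow (hc : Continuous ψ) (hs : HasCompactSupport ψ)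
    (hψ : IsRadiallyAntitone ψ) (n : ℕ) : IsRadiallyAntitone (convPow d ψ n) := by
  induction n with
  | zero => exact hψ
  | succ n ih =>
    refine ih.integral_sub_mul hψ fun u => ?_
    exact (((continuous_convPow hc hs n).comp (continuous_sub_left u)).mul hc
      ).integrable_of_hasCompactSupport hs.mul_left

end ConvPow

theorem psi_conv_powers_general (d : ℕ) (r : ℝ) (hr : 0 < r) :
    (∫ y, psiFn d r y) = 1 ∧
      ∀ n : ℕ, Continuous (convPow d (psiFn d r) n) ∧
        ∀ y y' : EuclideanSpace ℝ (Fin d), ‖y‖ ≤ ‖y'‖ →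
          convPow d (psiFn d r) n y' ≤ convPow d (psiFn d r) n y := by
  have hc := continuous_psiFn d hr.ne'
  have hs := hasCompactSupport_psiFn d r
  have hψ := isRadiallyAntitone_psiFn d r
  exact ⟨integral_psiFn d hr, fun n =>
    ⟨continuous_convPow hc hs n, isRadiallyAntitone_convPow hc hs hψ n⟩⟩

theorem psi_conv_powers (d : ℕ) (hd : 1 ≤ d) (r : ℝ) (hr : 0 < r) :
    (∫ y, psiFn d r y) = 1 ∧
      ∀ n : ℕ, Continuous (convPow d (psiFn d r) n) ∧
        ∀ y y' : EuclideanSpace ℝ (Fin d), ‖y‖ ≤ ‖y'‖ →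
          convPow d (psiFn d r) n y' ≤ convPow d (psiFn d r) n y :=
  psi_conv_powers_general d r hr
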